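/- arXiv:1708.05120 — 2 statements merged into one kernel-verified Lean document; each statement's English description precedes it below -/
import Mathlib

section
/- Let A₁, A₂ ∈ ℂ^{n×n}, B₁, B₂ ∈ ℂ^{n×m}, x₀ ∈ ℂ^n, and let u : ℝ → ℂ^m be continuous. Define Φ₁(t) and Φ₂(t) as the top-left and bottom-left n×n blocks of exp(t·{A₁,A₂}_⋄), and define x : [0,∞) → ℂ^n by x(t) = Φ₁(t)x₀ + Φ₂(t)^# x₀^# + ∫_0^t [ Φ₁(t−s)(B₁u(s) + B₂^# u(s)^#) + Φ₂(t−s)^# (B₁u(s) + B₂^# u(s)^#)^# ] ds. Then x is the unique solution of the initial value problem x'(t) = A₁x(t) + A₂^# x(t)^# + B₁u(t) + B₂^# u(t)^# for t ≥ 0 with x(0) = x₀. -/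
open Matrix
open scoped ComplexOrder

noncomputable section

/-- Entrywise complex conjugate of a matrix `M`, written `M^#` in the paper. -/
def mconj {n m : Type*} (A : Matrix n m ℂ) : Matrix n m ℂ := A.map (starRingEnd ℂ)

/-- The complex-lifting (doubled-up) matrix `{A₁,A₂}_⋄ = [[A₁, A₂^#], [A₂, A₁^#]]`. -/
def dlift {n m : Type*} (A₁ A₂ : Matrix n m ℂ) : Matrix (n ⊕ n) (m ⊕ m) ℂ :=
  Matrix.fromBlocks A₁ (mconj A₂) A₂ (mconj A₁)

/-- The real-representation matrix
`{A₁,A₂}_∘ = [[Re(A₁+A₂), −Im(A₁+A₂)], [Im(A₁−A₂), Re(A₁−A₂)]]`. -/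
def realRep {n m : Type*} (A₁ A₂ : Matrix n m ℂ) : Matrix (n ⊕ n) (m ⊕ m) ℝ :=
  Matrix.fromBlocks ((A₁ + A₂).map Complex.re) (-((A₁ + A₂).map Complex.im))
    ((A₁ - A₂).map Complex.im) ((A₁ - A₂).map Complex.re)

/-- The unitary matrix `H_n = (1/√2)·[[I, jI], [I, −jI]]`. -/
def Hmat (n : Type*) [DecidableEq n] : Matrix (n ⊕ n) (n ⊕ n) ℂ :=
  (Real.sqrt 2 : ℂ)⁻¹ • Matrix.fromBlocks 1 (Complex.I • 1) 1 (-(Complex.I • 1))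

/-- The swap matrix `E_n = [[0, I], [I, 0]]`. -/
def Emat (n : Type*) [DecidableEq n] : Matrix (n ⊕ n) (n ⊕ n) ℂ :=
  Matrix.fromBlocks 0 1 1 0

/-- The real vector `(Re x ; Im x)` associated with a complex vector `x`. -/
def vreal {m : Type*} (x : m → ℂ) : (m ⊕ m) → ℝ :=
  Sum.elim (fun i => (x i).re) (fun i => (x i).im)

section Aux
set_option linter.unusedSectionVars false
open NormedSpace
variable {ι κ : Type*} [Fintype ι] [DecidableEq ι] [Fintype κ] [DecidableEq κ]

lemma mconj_mconj (M : Matrix ι κ ℂ) : mconj (mconj M) = M := by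
  ext i j; simp [mconj]

lemma mconj_zero : mconj (0 : Matrix ι κ ℂ) = 0 := by ext i j; simp [mconj]

lemma mconj_add (M N : Matrix ι κ ℂ) : mconj (M + N) = mconj M + mconj N := by
  ext i j; simp [mconj]

lemma mconj_mul (M N : Matrix ι ι ℂ) : mconj (M * N) = mconj M * mconj N := by
  simp [mconj, Matrix.map_mul]

lemma mconj_one : mconj (1 : Matrix ι ι ℂ) = 1 :=
  Matrix.map_one _ (map_zero _) (map_one _)

lemma mconj_smul (t : ℝ) (M : Matrix ι κ ℂ) : mconj (t • M) = t • mconj M := by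
  ext i j; simp [mconj]

lemma Emat_mul_Emat : Emat ι * Emat ι = 1 := by
  simp [Emat, Matrix.fromBlocks_multiply, ← Matrix.fromBlocks_one]

lemma mconj_fromBlocks {a b c d : Type*} (A : Matrix a b ℂ) (B : Matrix a d ℂ)
    (C : Matrix c b ℂ) (D : Matrix c d ℂ) :
    mconj (Matrix.fromBlocks A B C D) =
      Matrix.fromBlocks (mconj A) (mconj B) (mconj C) (mconj D) :=
  Matrix.fromBlocks_map A B C D _

def scHom (ι : Type*) [Fintype ι] [DecidableEq ι] :
    Matrix (ι ⊕ ι) (ι ⊕ ι) ℂ →+* Matrix (ι ⊕ ι) (ι ⊕ ι) ℂ where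
  toFun M := Emat ι * mconj M * Emat ι
  map_one' := by show Emat ι * mconj 1 * Emat ι = 1; rw [mconj_one, mul_one, Emat_mul_Emat]
  map_mul' M N := by
    have hEE : ∀ z : Matrix (ι ⊕ ι) (ι ⊕ ι) ℂ, Emat ι * (Emat ι * z) = z := fun z => by
      rw [← mul_assoc, Emat_mul_Emat, one_mul]
    show Emat ι * mconj (M * N) * Emat ι = (Emat ι * mconj M * Emat ι) * (Emat ι * mconj N * Emat ι)
    rw [mconj_mul]
    simp only [mul_assoc, hEE]
  map_zero' := by show Emat ι * mconj 0 * Emat ι = 0; simp [mconj_zero]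
  map_add' M N := by
    show Emat ι * mconj (M + N) * Emat ι = Emat ι * mconj M * Emat ι + Emat ι * mconj N * Emat ι
    rw [mconj_add, mul_add, add_mul]

lemma scHom_continuous : Continuous (scHom ι) := by
  have h1 : Continuous fun M : Matrix (ι ⊕ ι) (ι ⊕ ι) ℂ => mconj M :=
    continuous_id.matrix_map continuous_star
  exact (continuous_const.matrix_mul h1).matrix_mul continuous_const

lemma scHom_smul (t : ℝ) (M : Matrix (ι ⊕ ι) (ι ⊕ ι) ℂ) :
    scHom ι (t • M) = t • scHom ι M := by
  show Emat ι * mconj (t • M) * Emat ι = t • (Emat ι * mconj M * Emat ι)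
  rw [mconj_smul, Matrix.mul_smul, Matrix.smul_mul]

lemma scHom_dlift (C₁ C₂ : Matrix ι ι ℂ) : scHom ι (dlift C₁ C₂) = dlift C₁ C₂ := by
  show Emat ι * mconj (dlift C₁ C₂) * Emat ι = _
  rw [dlift, mconj_fromBlocks, Emat, Matrix.fromBlocks_multiply, Matrix.fromBlocks_multiply]
  simp [mconj_mconj]

lemma sc_blocks (P : Matrix (ι ⊕ ι) (ι ⊕ ι) ℂ) :
    Emat ι * mconj P * Emat ι = Matrix.fromBlocks (mconj P.toBlocks₂₂) (mconj P.toBlocks₂₁)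
      (mconj P.toBlocks₁₂) (mconj P.toBlocks₁₁) := by
  conv_lhs => rw [← Matrix.fromBlocks_toBlocks P]
  rw [mconj_fromBlocks, Emat, Matrix.fromBlocks_multiply, Matrix.fromBlocks_multiply]
  simp

lemma dlift_of_fix {P : Matrix (ι ⊕ ι) (ι ⊕ ι) ℂ} (h : scHom ι P = P) :
    P = dlift P.toBlocks₁₁ P.toBlocks₂₁ := by
  have hP : Matrix.fromBlocks (mconj P.toBlocks₂₂) (mconj P.toBlocks₂₁)
      (mconj P.toBlocks₁₂) (mconj P.toBlocks₁₁) = P := by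
    rw [← sc_blocks]; exact h
  have h12 : P.toBlocks₁₂ = mconj P.toBlocks₂₁ := by
    conv_lhs => rw [← hP]
    simp
  have h22 : P.toBlocks₂₂ = mconj P.toBlocks₁₁ := by
    conv_lhs => rw [← hP]
    simp
  conv_lhs => rw [← Matrix.fromBlocks_toBlocks P, h12, h22]
  rfl

end Aux

section ExpAux
set_option linter.unusedSectionVars false
open NormedSpace
variable {ι : Type*} [Fintype ι] [DecidableEq ι]

lemma expA_cont (A : Matrix ι ι ℂ) : Continuous fun t : ℝ => exp (t • A) := by
  letI : SeminormedRing (Matrix ι ι ℂ) := Matrix.linftyOpSemiNormedRing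
  letI : NormedRing (Matrix ι ι ℂ) := Matrix.linftyOpNormedRing
  letI : NormedAlgebra ℝ (Matrix ι ι ℂ) := Matrix.linftyOpNormedAlgebra
  letI : NormedAlgebra ℚ (Matrix ι ι ℂ) := .restrictScalars ℚ ℝ _
  exact exp_continuous.comp (continuous_id.smul continuous_const)

lemma expA_entry_hasDerivAt (A : Matrix ι ι ℂ) (i j : ι) (t : ℝ) :
    HasDerivAt (fun u : ℝ => exp (u • A) i j) ((A * exp (t • A)) i j) t := by
  letI : SeminormedRing (Matrix ι ι ℂ) := Matrix.linftyOpSemiNormedRing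
  letI : NormedRing (Matrix ι ι ℂ) := Matrix.linftyOpNormedRing
  letI : NormedAlgebra ℝ (Matrix ι ι ℂ) := Matrix.linftyOpNormedAlgebra
  have h := hasDerivAt_exp_smul_const' (𝕂 := ℝ) A t
  let l : Matrix ι ι ℂ →ₗ[ℝ] ℂ :=
    { toFun := fun M => M i j, map_add' := fun _ _ => rfl, map_smul' := fun _ _ => rfl }
  exact (LinearMap.toContinuousLinearMap l).hasFDerivAt.comp_hasDerivAt t h

lemma expA_add (A : Matrix ι ι ℂ) (s t : ℝ) :
    exp ((s + t) • A) = exp (s • A) * exp (t • A) := by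
  rw [add_smul]
  exact Matrix.exp_add_of_commute _ _ (((Commute.refl A).smul_left s).smul_right t)

lemma expA_mul_neg (A : Matrix ι ι ℂ) (t : ℝ) :
    exp (t • A) * exp ((-t) • A) = 1 := by
  rw [← expA_add, add_neg_cancel, zero_smul, exp_zero]

lemma commute_expA (A : Matrix ι ι ℂ) (t : ℝ) :
    A * exp (t • A) = exp (t • A) * A :=
  (((Commute.refl A).smul_right t).exp_right).eq

end ExpAux

def dvec {ι : Type*} (v : ι → ℂ) : (ι ⊕ ι) → ℂ := Sum.elim v (star v)

section VecAux
set_option linter.unusedSectionVars false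
variable {ι κ : Type*} [Fintype ι] [DecidableEq ι] [Fintype κ] [DecidableEq κ]

lemma dvec_add (v w : ι → ℂ) : dvec (v + w) = dvec v + dvec w := by
  funext i; cases i <;> simp [dvec]

lemma dvec_sub (v w : ι → ℂ) : dvec (v - w) = dvec v - dvec w := by
  funext i; cases i <;> simp [dvec]

lemma mconj_mulVec_star (M : Matrix ι κ ℂ) (v : κ → ℂ) :
    (mconj M).mulVec (star v) = star (M.mulVec v) := by
  funext i
  simp [mconj, Matrix.mulVec, dotProduct, star_sum]

lemma dlift_mulVec (C₁ C₂ : Matrix ι κ ℂ) (v : κ → ℂ) :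
    (dlift C₁ C₂).mulVec (dvec v) =
      dvec (C₁.mulVec v + (mconj C₂).mulVec (star v)) := by
  rw [dlift, Matrix.fromBlocks_mulVec]
  have h1 : dvec v ∘ Sum.inl = v := rfl
  have h2 : dvec v ∘ Sum.inr = star v := rfl
  rw [h1, h2]
  funext i
  cases i with
  | inl i => simp [dvec]
  | inr i =>
    show (C₂.mulVec v + (mconj C₁).mulVec (star v)) i
      = star ((C₁.mulVec v + (mconj C₂).mulVec (star v)) i)
    have : star (C₁.mulVec v + (mconj C₂).mulVec (star v))
        = C₂.mulVec v + (mconj C₁).mulVec (star v) := by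
      rw [star_add, ← mconj_mulVec_star, ← mconj_mulVec_star, mconj_mconj, star_star]
      rw [add_comm]
    rw [← this]; rfl

end VecAux

section DliftExp
open NormedSpace
variable {ι : Type*} [Fintype ι] [DecidableEq ι]

lemma exp_dlift_eq (A₁ A₂ : Matrix ι ι ℂ) (t : ℝ) :
    exp (t • dlift A₁ A₂) =
      dlift (exp (t • dlift A₁ A₂)).toBlocks₁₁ (exp (t • dlift A₁ A₂)).toBlocks₂₁ := by
  apply dlift_of_fix
  letI : SeminormedRing (Matrix (ι ⊕ ι) (ι ⊕ ι) ℂ) := Matrix.linftyOpSemiNormedRing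
  letI : NormedRing (Matrix (ι ⊕ ι) (ι ⊕ ι) ℂ) := Matrix.linftyOpNormedRing
  letI : NormedAlgebra ℂ (Matrix (ι ⊕ ι) (ι ⊕ ι) ℂ) := Matrix.linftyOpNormedAlgebra
  letI : NormedAlgebra ℚ (Matrix (ι ⊕ ι) (ι ⊕ ι) ℂ) := .restrictScalars ℚ ℂ _
  refine (map_exp (scHom ι) scHom_continuous _).trans ?_
  rw [scHom_smul, scHom_dlift]
  rfl

end DliftExp

set_option maxHeartbeats 1000000 in
open NormedSpace in
/-- the variation-of-constants formula built from the blocks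
`Φ₁, Φ₂` of `exp(t{A₁,A₂}_⋄)` is the unique solution of the continuous-time
complex-valued linear system `x' = A₁x + A₂^#x^# + B₁u + B₂^#u^#`, `x(0) = x₀`. -/
theorem stmt_10 (n m : ℕ) (A₁ A₂ : Matrix (Fin n) (Fin n) ℂ)
    (B₁ B₂ : Matrix (Fin n) (Fin m) ℂ) (x₀ : Fin n → ℂ)
    (u : ℝ → Fin m → ℂ) (hu : Continuous u)
    (Φ₁ Φ₂ : ℝ → Matrix (Fin n) (Fin n) ℂ)
    (hΦ₁ : ∀ t : ℝ, Φ₁ t = (NormedSpace.exp (t • dlift A₁ A₂)).toBlocks₁₁)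
    (hΦ₂ : ∀ t : ℝ, Φ₂ t = (NormedSpace.exp (t • dlift A₁ A₂)).toBlocks₂₁)
    (w : ℝ → Fin n → ℂ)
    (hw : ∀ s : ℝ, w s = B₁.mulVec (u s) + (mconj B₂).mulVec (star (u s)))
    (x : ℝ → Fin n → ℂ)
    (hx : ∀ t : ℝ, x t =
      (Φ₁ t).mulVec x₀ + (mconj (Φ₂ t)).mulVec (star x₀) +
        ∫ s in (0:ℝ)..t,
          ((Φ₁ (t - s)).mulVec (w s) + (mconj (Φ₂ (t - s))).mulVec (star (w s)))) :
    x 0 = x₀ ∧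
    (∀ t : ℝ, 0 ≤ t →
      HasDerivAt x (A₁.mulVec (x t) + (mconj A₂).mulVec (star (x t)) + w t) t) ∧
    (∀ z : ℝ → Fin n → ℂ, z 0 = x₀ →
      (∀ t : ℝ, 0 ≤ t →
        HasDerivAt z (A₁.mulVec (z t) + (mconj A₂).mulVec (star (z t)) + w t) t) →
      ∀ t : ℝ, 0 ≤ t → z t = x t) := by
  set A : Matrix (Fin n ⊕ Fin n) (Fin n ⊕ Fin n) ℂ := dlift A₁ A₂ with hAdef
  -- symmetry of the exponential
  have hsym : ∀ t : ℝ, exp (t • A) = dlift (Φ₁ t) (Φ₂ t) := by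
    intro t; rw [hΦ₁ t, hΦ₂ t]; exact exp_dlift_eq A₁ A₂ t
  have hEv : ∀ (t : ℝ) (v : Fin n → ℂ),
      (exp (t • A)).mulVec (dvec v)
        = dvec ((Φ₁ t).mulVec v + (mconj (Φ₂ t)).mulVec (star v)) := by
    intro t v; rw [hsym t, dlift_mulVec]
  -- continuity of data
  have hwc : Continuous w := by
    have hweq : w = fun s => B₁.mulVec (u s) + (mconj B₂).mulVec (star (u s)) := funext hw
    rw [hweq]
    exact (continuous_const.matrix_mulVec hu).add
      (continuous_const.matrix_mulVec (continuous_star.comp hu))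
  have hWc : Continuous fun s => dvec (w s) := by
    apply continuous_pi; intro i
    cases i with
    | inl i => exact (continuous_apply i).comp hwc
    | inr i => exact continuous_star.comp ((continuous_apply i).comp hwc)
  -- initial value
  have hΦ₁0 : Φ₁ 0 = 1 := by
    rw [hΦ₁ 0, zero_smul, exp_zero, ← Matrix.fromBlocks_one, Matrix.toBlocks_fromBlocks₁₁]
  have hΦ₂0 : Φ₂ 0 = 0 := by
    rw [hΦ₂ 0, zero_smul, exp_zero, ← Matrix.fromBlocks_one, Matrix.toBlocks_fromBlocks₂₁]
  have h0 : x 0 = x₀ := by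
    rw [hx 0, intervalIntegral.integral_same, hΦ₁0, hΦ₂0, mconj_zero]
    simp [Matrix.one_mulVec, Matrix.zero_mulVec]
  -- the doubled-up flow
  set q : ℝ → (Fin n ⊕ Fin n) → ℂ :=
    fun s => (exp ((-s) • A)).mulVec (dvec (w s)) with hqdef
  have hqc : Continuous q :=
    ((expA_cont A).comp continuous_neg).matrix_mulVec hWc
  set g : ℝ → (Fin n ⊕ Fin n) → ℂ :=
    fun t => dvec x₀ + ∫ s in (0:ℝ)..t, q s with hgdef
  set Y : ℝ → (Fin n ⊕ Fin n) → ℂ := fun t => (exp (t • A)).mulVec (g t) with hYdef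
  -- Y t = dvec (x t)
  have hYx : ∀ t : ℝ, dvec (x t) = Y t := by
    intro t
    have hfd : ∀ s : ℝ,
        dvec ((Φ₁ (t - s)).mulVec (w s) + (mconj (Φ₂ (t - s))).mulVec (star (w s)))
          = (exp ((t - s) • A)).mulVec (dvec (w s)) := fun s => (hEv (t - s) (w s)).symm
    have hFc : Continuous fun s => (exp ((t - s) • A)).mulVec (dvec (w s)) :=
      ((expA_cont A).comp (continuous_const.sub continuous_id)).matrix_mulVec hWc
    have hfc : Continuous fun s =>
        ((Φ₁ (t - s)).mulVec (w s) + (mconj (Φ₂ (t - s))).mulVec (star (w s))) := by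
      have heq : (fun s => ((Φ₁ (t - s)).mulVec (w s) + (mconj (Φ₂ (t - s))).mulVec (star (w s))))
          = fun s => fun i => ((exp ((t - s) • A)).mulVec (dvec (w s))) (Sum.inl i) := by
        funext s i; rw [← hfd s]; rfl
      rw [heq]
      exact continuous_pi fun i => (continuous_apply _).comp hFc
    have hint : IntervalIntegrable
        (fun s => ((Φ₁ (t - s)).mulVec (w s) + (mconj (Φ₂ (t - s))).mulVec (star (w s))))
        MeasureTheory.volume 0 t := hfc.intervalIntegrable _ _
    -- dvec is a continuous linear map
    let dl : ((Fin n) → ℂ) →ₗ[ℝ] ((Fin n ⊕ Fin n) → ℂ) :=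
      { toFun := dvec
        map_add' := dvec_add
        map_smul' := fun r v => by
          funext i
          cases i with
          | inl i => rfl
          | inr i => show star (r • v i) = r • star (v i); rw [star_smul, star_trivial] }
    have step1 : dvec (x t) = (exp (t • A)).mulVec (dvec x₀)
        + ∫ s in (0:ℝ)..t, (exp ((t - s) • A)).mulVec (dvec (w s)) := by
      rw [hx t, dvec_add, hEv t x₀]
      congr 1
      have hcc := (LinearMap.toContinuousLinearMap dl).intervalIntegral_comp_comm hint
      have h2 : ∀ v, LinearMap.toContinuousLinearMap dl v = dvec v := fun _ => rfl
      simp only [h2] at hcc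
      rw [← hcc]
      exact intervalIntegral.integral_congr fun s _ => hfd s
    rw [step1]
    show _ = (exp (t • A)).mulVec (dvec x₀ + ∫ s in (0:ℝ)..t, q s)
    rw [Matrix.mulVec_add]
    congr 1
    -- ∫ exp((t-s)A) W = exp(tA) ∫ q
    have step2 : ∀ s : ℝ, (exp ((t - s) • A)).mulVec (dvec (w s))
        = (exp (t • A)).mulVec (q s) := by
      intro s
      show _ = (exp (t • A)).mulVec ((exp ((-s) • A)).mulVec (dvec (w s)))
      rw [Matrix.mulVec_mulVec, ← expA_add, sub_eq_add_neg]
    rw [intervalIntegral.integral_congr fun s _ => step2 s]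
    let ml : ((Fin n ⊕ Fin n) → ℂ) →ₗ[ℂ] ((Fin n ⊕ Fin n) → ℂ) := (exp (t • A)).mulVecLin
    have := (LinearMap.toContinuousLinearMap ml).intervalIntegral_comp_comm
      (hqc.intervalIntegrable (μ := MeasureTheory.volume) (0:ℝ) t)
    exact this
  -- derivative of Y
  have hYd : ∀ t : ℝ, HasDerivAt Y (A.mulVec (Y t) + dvec (w t)) t := by
    intro t
    have hgd : HasDerivAt g (q t) t := by
      have h1 : HasDerivAt (fun t => ∫ s in (0:ℝ)..t, q s) (q t) t :=
        intervalIntegral.integral_hasDerivAt_right (hqc.intervalIntegrable _ _)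
          (hqc.stronglyMeasurableAtFilter _ _) hqc.continuousAt
      exact h1.const_add (dvec x₀)
    rw [hasDerivAt_pi]
    intro i
    have hgj : ∀ j, HasDerivAt (fun t => g t j) (q t j) t := fun j => hasDerivAt_pi.1 hgd j
    have hsum : HasDerivAt (fun t => ∑ j, exp (t • A) i j * g t j)
        (∑ j, ((A * exp (t • A)) i j * g t j + exp (t • A) i j * q t j)) t :=
      HasDerivAt.fun_sum fun j _ => (expA_entry_hasDerivAt A i j t).mul (hgj j)
    have comp_eq : (fun t => Y t i) = fun t => ∑ j, exp (t • A) i j * g t j := by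
      funext τ
      show (exp (τ • A)).mulVec (g τ) i = _
      simp [Matrix.mulVec, dotProduct]
    rw [comp_eq]
    refine hsum.congr_deriv (Eq.symm ?_)
    rw [Finset.sum_add_distrib]
    have e1 : ∑ j, (A * exp (t • A)) i j * g t j = A.mulVec (Y t) i := by
      show _ = A.mulVec ((exp (t • A)).mulVec (g t)) i
      rw [Matrix.mulVec_mulVec]
      simp [Matrix.mulVec, dotProduct]
    have e2 : ∑ j, exp (t • A) i j * q t j = dvec (w t) i := by
      have hq1 : (exp (t • A)).mulVec (q t) = dvec (w t) := by
        show (exp (t • A)).mulVec ((exp ((-t) • A)).mulVec (dvec (w t))) = dvec (w t)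
        rw [Matrix.mulVec_mulVec, expA_mul_neg, Matrix.one_mulVec]
      calc ∑ j, exp (t • A) i j * q t j = (exp (t • A)).mulVec (q t) i := by
            simp [Matrix.mulVec, dotProduct]
        _ = dvec (w t) i := by rw [hq1]
    rw [e1, e2]
    rfl
  refine ⟨h0, ?_, ?_⟩
  · -- existence
    intro t _
    rw [hasDerivAt_pi]
    intro i
    have hYi := hasDerivAt_pi.1 (hYd t) (Sum.inl i)
    have hxY : (fun t => x t i) = fun t => Y t (Sum.inl i) := by
      funext τ; rw [← hYx τ]; rfl
    rw [hxY]
    convert hYi using 1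
    rw [← hYx t, hAdef, dlift_mulVec]
    show (A₁.mulVec (x t) + (mconj A₂).mulVec (star (x t)) + w t) i
      = (dvec (A₁.mulVec (x t) + (mconj A₂).mulVec (star (x t))) + dvec (w t)) (Sum.inl i)
    simp [dvec]
  · -- uniqueness
    intro z hz0 hz t ht
    set Z : ℝ → (Fin n ⊕ Fin n) → ℂ := fun τ => dvec (z τ) with hZdef
    have hZd : ∀ τ : ℝ, 0 ≤ τ → HasDerivAt Z (A.mulVec (Z τ) + dvec (w τ)) τ := by
      intro τ hτ
      rw [hasDerivAt_pi]
      intro i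
      cases i with
      | inl i =>
        have hzi := hasDerivAt_pi.1 (hz τ hτ) i
        have : (fun σ => Z σ (Sum.inl i)) = fun σ => z σ i := rfl
        rw [this]
        convert hzi using 1
        show (A.mulVec (dvec (z τ)) + dvec (w τ)) (Sum.inl i) = _
        rw [hAdef, dlift_mulVec]
        simp [dvec]
      | inr i =>
        have hzi := (hasDerivAt_pi.1 (hz τ hτ) i).star
        have : (fun σ => Z σ (Sum.inr i)) = fun σ => star (z σ i) := rfl
        rw [this]
        convert hzi using 1
        show (A.mulVec (dvec (z τ)) + dvec (w τ)) (Sum.inr i) = _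
        rw [hAdef, dlift_mulVec]
        simp [dvec]
    set D : ℝ → (Fin n ⊕ Fin n) → ℂ := fun τ => Y τ - Z τ with hDdef
    have hDd : ∀ τ : ℝ, 0 ≤ τ → HasDerivAt D (A.mulVec (D τ)) τ := by
      intro τ hτ
      have := (hYd τ).fun_sub (hZd τ hτ)
      refine this.congr_deriv (Eq.symm ?_)
      show A.mulVec (Y τ - Z τ) = _
      rw [Matrix.mulVec_sub]
      abel
    set F : ℝ → (Fin n ⊕ Fin n) → ℂ := fun τ => (exp (τ • (-A))).mulVec (D τ) with hFdef
    have hFd : ∀ τ : ℝ, 0 ≤ τ → HasDerivAt F 0 τ := by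
      intro τ hτ
      rw [hasDerivAt_pi]
      intro i
      have hsum : HasDerivAt (fun σ => ∑ j, exp (σ • (-A)) i j * D σ j)
          (∑ j, (((-A) * exp (τ • (-A))) i j * D τ j
            + exp (τ • (-A)) i j * (A.mulVec (D τ)) j)) τ :=
        HasDerivAt.fun_sum fun j _ =>
          (expA_entry_hasDerivAt (-A) i j τ).mul (hasDerivAt_pi.1 (hDd τ hτ) j)
      have hFeq : (fun σ => F σ i) = fun σ => ∑ j, exp (σ • (-A)) i j * D σ j := by
        funext σ
        show (exp (σ • (-A))).mulVec (D σ) i = _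
        simp [Matrix.mulVec, dotProduct]
      rw [hFeq]
      refine hsum.congr_deriv (Eq.symm ?_)
      rw [Finset.sum_add_distrib]
      have e1 : ∑ j, ((-A) * exp (τ • (-A))) i j * D τ j
          = (((-A) * exp (τ • (-A))).mulVec (D τ)) i := by
        simp [Matrix.mulVec, dotProduct]
      have e2 : ∑ j, exp (τ • (-A)) i j * (A.mulVec (D τ)) j
          = ((exp (τ • (-A)) * A).mulVec (D τ)) i := by
        rw [← Matrix.mulVec_mulVec]
        simp [Matrix.mulVec, dotProduct]
      rw [e1, e2, ← Pi.add_apply, ← Matrix.add_mulVec]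
      have hzero : (-A) * exp (τ • (-A)) + exp (τ • (-A)) * A = 0 := by
        rw [commute_expA (-A) τ, ← Matrix.mul_add, neg_add_cancel, Matrix.mul_zero]
      rw [hzero, Matrix.zero_mulVec]
    have hF0 : F 0 = 0 := by
      have hD0 : D 0 = 0 := by
        show Y 0 - Z 0 = 0
        rw [← hYx 0, h0, hZdef]
        show dvec x₀ - dvec (z 0) = 0
        rw [hz0, sub_self]
      show (exp ((0:ℝ) • (-A))).mulVec (D 0) = 0
      rw [hD0, Matrix.mulVec_zero]
    have hFt : F t = 0 := by
      rcases eq_or_lt_of_le ht with hte | hte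
      · rw [← hte]; exact hF0
      · have hconst := constant_of_has_deriv_right_zero (f := F) (a := 0) (b := t)
          (fun τ hτ => ((hFd τ hτ.1).continuousAt.continuousWithinAt))
          (fun τ hτ => (hFd τ hτ.1).hasDerivWithinAt)
        rw [hconst t (Set.right_mem_Icc.2 ht), hF0]
    have hDt : D t = 0 := by
      have hstep : (exp (t • A)).mulVec (F t) = D t := by
        show (exp (t • A)).mulVec ((exp (t • (-A))).mulVec (D t)) = D t
        rw [Matrix.mulVec_mulVec, show t • (-A) = (-t) • A by rw [smul_neg, neg_smul],
          expA_mul_neg, Matrix.one_mulVec]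
      rw [← hstep, hFt, Matrix.mulVec_zero]
    have hZY : Z t = Y t := by
      have := sub_eq_zero.1 hDt
      exact this.symm
    funext i
    calc z t i = Z t (Sum.inl i) := rfl
      _ = Y t (Sum.inl i) := by rw [hZY]
      _ = x t i := by rw [← hYx t]; rfl
end
end

section
/- Let A₂ ∈ ℂ^{n×n} and B₂ ∈ ℂ^{n×m}. Then: (i) (continuous time) the PBH rank condition rank [[sI_n, −A₂^#, 0, B₂^#], [−A₂, sI_n, B₂, 0]] = 2n holds for all s ∈ ℂ with Re(s) ≥ 0 if and only if it holds for all s ∈ ℂ (i.e., the continuous-time antilinear system is stabilizable if and only if it is controllable); and (ii) (discrete time) the PBH rank condition rank [[sI_n, −A₂^#, 0, B₂^#], [−A₂, sI_n, B₂, 0]] = 2n for all s ∈ ℂ with |s| ≥ 1 holds if and only if rank [λI_n − A₂A₂^#, B₂, A₂B₂^#] = n for all λ ∈ ℂ with |λ| ≥ 1. -/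
open Matrix
open scoped ComplexOrder

noncomputable section

/-- Full row rank is equivalent to triviality of the left kernel. -/
lemma rank_eq_card_iff' {r c : Type*} [Fintype r] [Fintype c] (M : Matrix r c ℂ)
    {k : ℕ} (hk : Fintype.card r = k) :
    M.rank = k ↔ ∀ v : r → ℂ, v ᵥ* M = 0 → v = 0 := by
  classical
  subst hk
  rw [← M.rank_transpose]
  have hrn := LinearMap.finrank_range_add_finrank_ker (Mᵀ.mulVecLin)
  rw [Module.finrank_fintype_fun_eq_card] at hrn
  rw [Matrix.rank]
  constructor
  · intro h v hv
    have hker : LinearMap.ker Mᵀ.mulVecLin = ⊥ := by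
      have : Module.finrank ℂ (LinearMap.ker Mᵀ.mulVecLin) = 0 := by omega
      exact Submodule.finrank_eq_zero.mp this
    have : Mᵀ.mulVecLin v = 0 := by
      rw [Matrix.mulVecLin_apply, Matrix.mulVec_transpose, hv]
    exact (LinearMap.ker_eq_bot'.mp hker) v this
  · intro h
    have hker : LinearMap.ker Mᵀ.mulVecLin = ⊥ := by
      rw [LinearMap.ker_eq_bot']
      intro v hv
      exact h v (by rwa [Matrix.mulVecLin_apply, Matrix.mulVec_transpose] at hv)
    have : Module.finrank ℂ (LinearMap.ker Mᵀ.mulVecLin) = 0 := by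
      rw [hker]; simp
    omega

lemma vecMul_smul_one {k : Type*} [Fintype k] [DecidableEq k] (s : ℂ) (v : k → ℂ) :
    v ᵥ* (s • (1 : Matrix k k ℂ)) = s • v := by
  rw [Matrix.smul_one_eq_diagonal]
  ext i
  rw [Matrix.vecMul_diagonal]
  simp [mul_comm]

lemma selim_zero {α β γ : Type*} [Zero γ] {a : α → γ} {b : β → γ} (h : Sum.elim a b = 0) :
    a = 0 ∧ b = 0 :=
  ⟨funext fun i => congrFun h (.inl i), funext fun i => congrFun h (.inr i)⟩

/-- Description of the left kernel of the PBH matrix of the lifted system. -/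
lemma pbh_kernel_iff {n m : ℕ} (A₂ : Matrix (Fin n) (Fin n) ℂ)
    (B₂ : Matrix (Fin n) (Fin m) ℂ) (s : ℂ) :
    (∀ v : (Fin n ⊕ Fin n) → ℂ,
        v ᵥ* (Matrix.fromCols
          (Matrix.fromBlocks (s • (1 : Matrix (Fin n) (Fin n) ℂ)) (-(mconj A₂)) (-A₂)
            (s • (1 : Matrix (Fin n) (Fin n) ℂ)))
          (Matrix.fromBlocks 0 (mconj B₂) B₂ 0)) = 0 → v = 0) ↔
    (∀ v₁ v₂ : Fin n → ℂ, s • v₁ = v₂ ᵥ* A₂ → s • v₂ = v₁ ᵥ* mconj A₂ →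
        v₂ ᵥ* B₂ = 0 → v₁ ᵥ* mconj B₂ = 0 → v₁ = 0 ∧ v₂ = 0) := by
  constructor
  · intro h v₁ v₂ h1 h2 h3 h4
    have hz := h (Sum.elim v₁ v₂) ?_
    · exact ⟨funext fun i => congrFun hz (.inl i), funext fun i => congrFun hz (.inr i)⟩
    · rw [Matrix.vecMul_fromCols, Matrix.vecMul_fromBlocks, Matrix.vecMul_fromBlocks]
      simp only [Sum.elim_comp_inl, Sum.elim_comp_inr, vecMul_smul_one,
        Matrix.vecMul_neg, Matrix.vecMul_zero, Matrix.zero_vecMul]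
      rw [h3, h4, ← h1, ← h2]
      simp
  · intro h v hv
    rw [Matrix.vecMul_fromCols, Matrix.vecMul_fromBlocks, Matrix.vecMul_fromBlocks] at hv
    simp only [vecMul_smul_one, Matrix.vecMul_neg, Matrix.vecMul_zero,
      Matrix.zero_vecMul] at hv
    obtain ⟨hA, hB⟩ := selim_zero hv
    obtain ⟨e1, e2⟩ := selim_zero hA
    obtain ⟨e3, e4⟩ := selim_zero hB
    obtain ⟨h1, h2⟩ := h (v ∘ Sum.inl) (v ∘ Sum.inr)
      (by rwa [add_neg_eq_zero] at e1)
      (by rw [neg_add_eq_zero] at e2; exact e2.symm)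
      (by rwa [zero_add] at e3) (by rwa [add_zero] at e4)
    funext i
    cases i with
    | inl i => exact congrFun h1 i
    | inr i => exact congrFun h2 i

/-- Description of the left kernel of the reduced discrete-time PBH matrix. -/
lemma reduced_kernel_iff {n m : ℕ} (A₂ : Matrix (Fin n) (Fin n) ℂ)
    (B₂ : Matrix (Fin n) (Fin m) ℂ) (l : ℂ) :
    (∀ w : Fin n → ℂ,
        w ᵥ* (Matrix.fromCols (l • (1 : Matrix (Fin n) (Fin n) ℂ) - A₂ * mconj A₂)
          (Matrix.fromCols B₂ (A₂ * mconj B₂))) = 0 → w = 0) ↔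
    (∀ w : Fin n → ℂ, l • w = w ᵥ* (A₂ * mconj A₂) → w ᵥ* B₂ = 0 →
        w ᵥ* (A₂ * mconj B₂) = 0 → w = 0) := by
  constructor
  · intro h w h1 h2 h3
    refine h w ?_
    rw [Matrix.vecMul_fromCols, Matrix.vecMul_fromCols, Matrix.vecMul_sub,
      vecMul_smul_one, h1, h2, h3]
    simp
  · intro h w hw
    rw [Matrix.vecMul_fromCols, Matrix.vecMul_fromCols, Matrix.vecMul_sub,
      vecMul_smul_one] at hw
    obtain ⟨e1, hB⟩ := selim_zero hw
    obtain ⟨e2, e3⟩ := selim_zero hB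
    exact h w (by rwa [sub_eq_zero] at e1) e2 e3

/-- stabilizability of the antilinear system: (i) in continuous time,
the PBH rank condition on the closed right half-plane is equivalent to the condition
on all of ℂ (stabilizable iff controllable); (ii) in discrete time, the PBH condition
for `|s| ≥ 1` is equivalent to `rank [λI − A₂A₂^#, B₂, A₂B₂^#] = n` for all `|λ| ≥ 1`. -/
theorem stmt_18 (n m : ℕ) (A₂ : Matrix (Fin n) (Fin n) ℂ)
    (B₂ : Matrix (Fin n) (Fin m) ℂ)
    (P : ℂ → Matrix (Fin n ⊕ Fin n) ((Fin n ⊕ Fin n) ⊕ (Fin m ⊕ Fin m)) ℂ)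
    (hP : ∀ s : ℂ, P s =
      Matrix.fromCols
        (Matrix.fromBlocks (s • (1 : Matrix (Fin n) (Fin n) ℂ)) (-(mconj A₂)) (-A₂)
          (s • (1 : Matrix (Fin n) (Fin n) ℂ)))
        (Matrix.fromBlocks 0 (mconj B₂) B₂ 0)) :
    ((∀ s : ℂ, 0 ≤ s.re → (P s).rank = 2 * n) ↔ (∀ s : ℂ, (P s).rank = 2 * n)) ∧
    ((∀ s : ℂ, 1 ≤ ‖s‖ → (P s).rank = 2 * n) ↔
      (∀ l : ℂ, 1 ≤ ‖l‖ →
        (Matrix.fromCols (l • (1 : Matrix (Fin n) (Fin n) ℂ) - A₂ * mconj A₂)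
          (Matrix.fromCols B₂ (A₂ * mconj B₂))).rank = n)) := by
  have card2 : Fintype.card (Fin n ⊕ Fin n) = 2 * n := by simp [two_mul]
  have hPB : ∀ s : ℂ, ((P s).rank = 2 * n ↔
      ∀ v₁ v₂ : Fin n → ℂ, s • v₁ = v₂ ᵥ* A₂ → s • v₂ = v₁ ᵥ* mconj A₂ →
        v₂ ᵥ* B₂ = 0 → v₁ ᵥ* mconj B₂ = 0 → v₁ = 0 ∧ v₂ = 0) := by
    intro s
    rw [hP s, rank_eq_card_iff' _ card2]
    exact pbh_kernel_iff A₂ B₂ s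
  have cardn : Fintype.card (Fin n) = n := by simp
  have hQ : ∀ l : ℂ,
      ((Matrix.fromCols (l • (1 : Matrix (Fin n) (Fin n) ℂ) - A₂ * mconj A₂)
          (Matrix.fromCols B₂ (A₂ * mconj B₂))).rank = n ↔
      ∀ w : Fin n → ℂ, l • w = w ᵥ* (A₂ * mconj A₂) → w ᵥ* B₂ = 0 →
        w ᵥ* (A₂ * mconj B₂) = 0 → w = 0) := by
    intro l
    rw [rank_eq_card_iff' _ cardn]
    exact reduced_kernel_iff A₂ B₂ l
  constructor
  · -- (i) continuous time
    constructor
    · intro h s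
      rcases le_or_gt 0 s.re with hs | hs
      · exact h s hs
      · rw [hPB s]
        intro v₁ v₂ h1 h2 h3 h4
        have hneg : (0 : ℝ) ≤ (-s).re := by
          rw [Complex.neg_re]; linarith
        obtain ⟨hv1, hv2⟩ := (hPB (-s)).mp (h (-s) hneg) v₁ (-v₂)
          (by rw [Matrix.neg_vecMul, ← h1, neg_smul])
          (by rw [neg_smul, smul_neg, neg_neg]; exact h2)
          (by rw [Matrix.neg_vecMul, h3, neg_zero]) h4
        exact ⟨hv1, by rwa [neg_eq_zero] at hv2⟩
    · intro h s _
      exact h s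
  · -- (ii) discrete time
    constructor
    · intro h l hl
      rw [hQ l]
      intro w h1 h2 h3
      obtain ⟨s, hs⟩ := IsAlgClosed.exists_pow_nat_eq l two_pos
      have habs2 : ‖s‖ ^ 2 = ‖l‖ := by rw [← hs, norm_pow]
      have habs : 1 ≤ ‖s‖ := by
        nlinarith [norm_nonneg s]
      have hsne : s ≠ 0 := by
        intro h0
        rw [h0, norm_zero] at habs
        linarith
      obtain ⟨hv1, hv2⟩ := (hPB s).mp (h s habs) (w ᵥ* A₂) (s • w)
        (by rw [Matrix.smul_vecMul])
        (by rw [smul_smul, Matrix.vecMul_vecMul, ← h1, ← hs]; ring_nf)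
        (by rw [Matrix.smul_vecMul, h2, smul_zero])
        (by rw [Matrix.vecMul_vecMul, h3])
      rcases smul_eq_zero.mp hv2 with h0 | h0
      · exact absurd h0 hsne
      · exact h0
    · intro h s hs
      rw [hPB s]
      intro v₁ v₂ h1 h2 h3 h4
      have hsne : s ≠ 0 := by
        intro h0
        rw [h0, norm_zero] at hs
        linarith
      have hl : 1 ≤ ‖s ^ 2‖ := by
        rw [norm_pow]
        nlinarith
      have hv2 : v₂ = 0 := by
        refine (hQ (s ^ 2)).mp (h (s ^ 2) hl) v₂ ?_ h3 ?_
        · rw [← Matrix.vecMul_vecMul, ← h1, Matrix.smul_vecMul, ← h2, smul_smul]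
          ring_nf
        · rw [← Matrix.vecMul_vecMul, ← h1, Matrix.smul_vecMul, h4, smul_zero]
      refine ⟨?_, hv2⟩
      have : s • v₁ = 0 := by rw [h1, hv2, Matrix.zero_vecMul]
      rcases smul_eq_zero.mp this with h0 | h0
      · exact absurd h0 hsne
      · exact h0
end
end
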